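/- Let Ω ⊂ ℝ^d be a compact convex set with nonempty interior, let x, y ∈ Ω, and let w : [0,∞) → ℝ^d be a continuous path with w(0) = 0. If (X, l, n) is a solution of the Skorokhod problem for (x, w) in Ω and (Y, λ, m) is a solution of the Skorokhod problem for (y, w) in Ω (i.e. with the same driving path w), then |X(t) − Y(t)| ≤ |x − y| for all t ≥ 0. -/

import Mathlib

/-!
With `Z = X - Y` the driving path cancels, so `Z` moves only through the reflection terms:
`Z b - Z a = ∫_{(a,b]} n dl - ∫_{(a,b]} m dλ`. Expanding `‖Z b‖² - ‖Z a‖²`, the cross term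
`2⟪Z a, Z b - Z a⟫` is at most `2ε (Δl + Δλ)` once `Z` oscillates by at most `ε` on `(a, b]`,
because the inward-normal condition tested at the other path gives `⟪Z s, n s⟫ ≤ 0` `dl`-a.e.
and `⟪Z s, m s⟫ ≥ 0` `dλ`-a.e.; the quadratic term is at most `ε (Δl + Δλ)` as well. Chaining
these local bounds over `[0, t]` by uniform continuity of `Z` gives
`‖Z t‖² ≤ ‖Z 0‖² + 3ε (l t + λ t)` for every `ε > 0`.
-/

open MeasureTheory Set
open scoped RealInnerProductSpace

/-- The Lebesgue–Stieltjes measure associated with a continuous nondecreasing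
function `l : ℝ → ℝ`. -/
noncomputable def lsMeasure (l : ℝ → ℝ) (hm : Monotone l) (hc : Continuous l) :
    MeasureTheory.Measure ℝ :=
  StieltjesFunction.measure ⟨l, hm, fun _ => hc.continuousWithinAt⟩

/-- A solution `(X, l, n)` of the Skorokhod problem for `(x, w)` in `Ω`:
`X` is a continuous path in `Ω` starting at `x`; `l` is a continuous nondecreasing
local time (extended by `0` to `(-∞,0]`) starting at `0`; `n` is a Borel measurable
vector field with `‖n s‖ ≤ 1`; the Stieltjes measure `dl` is carried by the times at
which `X` is on the boundary `∂Ω`; for `dl`-a.e. `s`, `n s` is an inward normal to `Ω`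
at `X s`; and `X t = x + w t + ∫₀ᵗ n(s) dl(s)` for all `t ≥ 0`. -/
structure IsSkorokhodSolution {d : ℕ} (Ω : Set (EuclideanSpace ℝ (Fin d)))
    (x : EuclideanSpace ℝ (Fin d)) (w : ℝ → EuclideanSpace ℝ (Fin d))
    (X : ℝ → EuclideanSpace ℝ (Fin d)) (l : ℝ → ℝ)
    (n : ℝ → EuclideanSpace ℝ (Fin d)) : Prop where
  contX : ContinuousOn X (Ici 0)
  mapsTo : ∀ t, 0 ≤ t → X t ∈ Ω
  init : X 0 = x
  l_mono : Monotone l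
  l_cont : Continuous l
  l_zero : ∀ t ≤ (0 : ℝ), l t = 0
  n_meas : Measurable n
  n_bound : ∀ s, ‖n s‖ ≤ 1
  carried : lsMeasure l l_mono l_cont {s | 0 ≤ s ∧ X s ∉ frontier Ω} = 0
  normal : ∀ᵐ (s : ℝ) ∂(lsMeasure l l_mono l_cont), ∀ z ∈ Ω, 0 ≤ ⟪z - X s, n s⟫
  eqn : ∀ t, 0 ≤ t →
    X t = x + w t + ∫ s in Ioc (0 : ℝ) t, n s ∂(lsMeasure l l_mono l_cont)

open Filter Topology

section InnerProductSpace

variable {E : Type*} [NormedAddCommGroup E] [InnerProductSpace ℝ E]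

theorem inner_setIntegral_le_of_ae_inner_nonpos {α : Type*} [MeasurableSpace α] [CompleteSpace E]
    {μ : Measure α} {S : Set α} {n Z : α → E}
    {v : E} {ε : ℝ} (hS : MeasurableSet S) (hμS : μ S ≠ ⊤) (hn : IntegrableOn n S μ)
    (hn1 : ∀ s ∈ S, ‖n s‖ ≤ 1) (hZ : ∀ s ∈ S, ‖Z s - v‖ ≤ ε)
    (hnormal : ∀ᵐ s ∂μ.restrict S, ⟪Z s, n s⟫ ≤ 0) :
    ⟪v, ∫ s in S, n s ∂μ⟫ ≤ ε * μ.real S := by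
  rw [← integral_inner hn]
  calc ∫ s in S, ⟪v, n s⟫ ∂μ ≤ ∫ _ in S, ε ∂μ := by
        refine integral_mono_ae (hn.const_inner v) (integrableOn_const hμS) ?_
        filter_upwards [hnormal, ae_restrict_mem hS] with s hs hmem
        have hε : 0 ≤ ε := (norm_nonneg _).trans (hZ s hmem)
        have hdev : ⟪v - Z s, n s⟫ ≤ ε :=
          calc ⟪v - Z s, n s⟫ ≤ ‖v - Z s‖ * ‖n s‖ := real_inner_le_norm _ _
            _ ≤ ε * 1 := by
              rw [norm_sub_rev]; exact mul_le_mul (hZ s hmem) (hn1 s hmem) (norm_nonneg _) hε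
            _ = ε := mul_one ε
        have hsplit : ⟪v, n s⟫ = ⟪Z s, n s⟫ + ⟪v - Z s, n s⟫ := by
          rw [← inner_add_left, add_sub_cancel]
        linarith
    _ = ε * μ.real S := by rw [setIntegral_const, smul_eq_mul, mul_comm]

theorem norm_sq_sub_norm_sq_le_of_sub_eq {z z' I J : E} {ε p q : ℝ} (hsub : z' - z = I - J)
    (hI : ⟪z, I⟫ ≤ ε * p) (hJ : ⟪-z, J⟫ ≤ ε * q) (hIp : ‖I‖ ≤ p) (hJq : ‖J‖ ≤ q)
    (hclose : ‖z' - z‖ ≤ ε) :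
    ‖z'‖ ^ 2 - ‖z‖ ^ 2 ≤ 3 * ε * (p + q) := by
  have hexpand : ‖z'‖ ^ 2 = ‖z‖ ^ 2 + 2 * ⟪z, z' - z⟫ + ‖z' - z‖ ^ 2 := by
    rw [← norm_add_sq_real, add_sub_cancel]
  have hcross : ⟪z, z' - z⟫ ≤ ε * (p + q) := by
    rw [hsub, inner_sub_right]
    rw [inner_neg_left] at hJ
    linarith
  have hsmall : ‖z' - z‖ ^ 2 ≤ ε * (p + q) := by
    have hpq : ‖z' - z‖ ≤ p + q := by
      rw [hsub]; exact (norm_sub_le I J).trans (add_le_add hIp hJq)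
    rw [sq]; exact mul_le_mul hclose hpq (norm_nonneg _) ((norm_nonneg _).trans hclose)
  linarith

end InnerProductSpace

theorem le_of_locally_antitoneOn_Icc {H : ℝ → ℝ} {a b δ : ℝ} (hab : a ≤ b) (hδ : 0 < δ)
    (hloc : ∀ s ∈ Icc a b, ∀ u ∈ Icc a b, s < u → u - s < δ → H u ≤ H s) : H b ≤ H a := by
  have hstep : ∀ k : ℕ, ∀ u ∈ Icc a b, u ≤ a + k * (δ / 2) → H u ≤ H a := by
    intro k
    induction k with
    | zero =>
      intro u hu hua
      rw [le_antisymm (by simpa using hua) hu.1]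
    | succ k ih =>
      intro u hu hua
      set s := a + k * (δ / 2) with hs_def
      by_cases hus : u ≤ s
      · exact ih u hu hus
      · have hs : s ∈ Icc a b := ⟨le_add_of_nonneg_right (by positivity), by linarith [hu.2]⟩
        push_cast at hua
        exact (hloc s hs u hu (not_le.mp hus) (by linarith)).trans (ih s hs le_rfl)
  obtain ⟨k, hk⟩ := exists_nat_gt ((b - a) / (δ / 2))
  refine hstep k b ⟨hab, le_rfl⟩ ?_
  rw [div_lt_iff₀ (by positivity)] at hk
  linarith

theorem le_of_forall_pos_le_add_mul {a b K : ℝ} (h : ∀ ε > 0, a ≤ b + ε * K) : a ≤ b := by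
  have hlim : Tendsto (fun ε => b + ε * K) (𝓝[>] 0) (𝓝 b) := by
    refine tendsto_nhdsWithin_of_tendsto_nhds ?_
    simpa using tendsto_const_nhds.add ((tendsto_id (x := 𝓝 (0 : ℝ))).mul_const K)
  exact ge_of_tendsto hlim (eventually_nhdsWithin_of_forall h)

section lsMeasure

variable {l : ℝ → ℝ} (hm : Monotone l) (hc : Continuous l)

theorem lsMeasure_Ioc_ne_top (a b : ℝ) : lsMeasure l hm hc (Ioc a b) ≠ ⊤ := by
  rw [lsMeasure, StieltjesFunction.measure_Ioc]; exact ENNReal.ofReal_ne_top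

theorem lsMeasure_real_Ioc {a b : ℝ} (hab : a ≤ b) :
    (lsMeasure l hm hc).real (Ioc a b) = l b - l a := by
  rw [measureReal_def, lsMeasure, StieltjesFunction.measure_Ioc,
    ENNReal.toReal_ofReal (sub_nonneg.mpr (hm hab))]

end lsMeasure

namespace IsSkorokhodSolution

variable {d : ℕ} {Ω : Set (EuclideanSpace ℝ (Fin d))} {x : EuclideanSpace ℝ (Fin d)}
  {w X n : ℝ → EuclideanSpace ℝ (Fin d)} {l : ℝ → ℝ}

theorem integrableOn_Ioc (h : IsSkorokhodSolution Ω x w X l n) (a b : ℝ) :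
    IntegrableOn n (Ioc a b) (lsMeasure l h.l_mono h.l_cont) :=
  Integrable.mono' (integrableOn_const (lsMeasure_Ioc_ne_top _ _ a b))
    h.n_meas.aestronglyMeasurable.restrict (ae_of_all _ h.n_bound)

theorem norm_setIntegral_Ioc_le (h : IsSkorokhodSolution Ω x w X l n) {a b : ℝ} (hab : a ≤ b) :
    ‖∫ s in Ioc a b, n s ∂(lsMeasure l h.l_mono h.l_cont)‖ ≤ l b - l a := by
  calc _ ≤ 1 * (lsMeasure l h.l_mono h.l_cont).real (Ioc a b) :=
        norm_setIntegral_le_of_norm_le_const (lsMeasure_Ioc_ne_top _ _ a b).lt_top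
          fun s _ => h.n_bound s
    _ = l b - l a := by rw [one_mul, lsMeasure_real_Ioc _ _ hab]

theorem sub_eq_setIntegral (h : IsSkorokhodSolution Ω x w X l n) {a b : ℝ} (ha : 0 ≤ a)
    (hab : a ≤ b) :
    X b - X a = w b - w a + ∫ s in Ioc a b, n s ∂(lsMeasure l h.l_mono h.l_cont) := by
  have hsplit := setIntegral_union (Ioc_disjoint_Ioc_of_le le_rfl) measurableSet_Ioc
    (h.integrableOn_Ioc 0 a) (h.integrableOn_Ioc a b)
  rw [Ioc_union_Ioc_eq_Ioc ha hab] at hsplit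
  rw [h.eqn b (ha.trans hab), h.eqn a ha, hsplit]
  abel

theorem ae_inner_sub_nonpos (h : IsSkorokhodSolution Ω x w X l n) {Y : ℝ → EuclideanSpace ℝ (Fin d)}
    (hY : ∀ s, 0 ≤ s → Y s ∈ Ω) {a b : ℝ} (ha : 0 ≤ a) :
    ∀ᵐ s ∂(lsMeasure l h.l_mono h.l_cont).restrict (Ioc a b), ⟪X s - Y s, n s⟫ ≤ 0 := by
  filter_upwards [ae_restrict_of_ae h.normal, ae_restrict_mem measurableSet_Ioc]
    with s hnormal hs
  have := hnormal (Y s) (hY s (ha.trans hs.1.le))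
  rw [← neg_sub, inner_neg_left] at this
  linarith

theorem norm_sub_sq_increment_le {y : EuclideanSpace ℝ (Fin d)} {Y m : ℝ → EuclideanSpace ℝ (Fin d)}
    {lam : ℝ → ℝ} (h : IsSkorokhodSolution Ω x w X l n) (h' : IsSkorokhodSolution Ω y w Y lam m)
    {a b ε : ℝ} (ha : 0 ≤ a) (hab : a < b)
    (hclose : ∀ s ∈ Ioc a b, ‖(X s - Y s) - (X a - Y a)‖ ≤ ε) :
    ‖X b - Y b‖ ^ 2 - ‖X a - Y a‖ ^ 2 ≤ 3 * ε * ((l b - l a) + (lam b - lam a)) := by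
  have hsub : (X b - Y b) - (X a - Y a) = (∫ s in Ioc a b, n s ∂(lsMeasure l h.l_mono h.l_cont))
      - ∫ s in Ioc a b, m s ∂(lsMeasure lam h'.l_mono h'.l_cont) := by
    calc (X b - Y b) - (X a - Y a) = (X b - X a) - (Y b - Y a) := by abel
      _ = _ := by rw [h.sub_eq_setIntegral ha hab.le, h'.sub_eq_setIntegral ha hab.le]; abel
  refine norm_sq_sub_norm_sq_le_of_sub_eq hsub ?_ ?_ (h.norm_setIntegral_Ioc_le hab.le)
    (h'.norm_setIntegral_Ioc_le hab.le) (hclose b ⟨hab, le_rfl⟩)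
  · rw [← lsMeasure_real_Ioc h.l_mono h.l_cont hab.le]
    exact inner_setIntegral_le_of_ae_inner_nonpos measurableSet_Ioc (lsMeasure_Ioc_ne_top _ _ a b)
      (h.integrableOn_Ioc a b) (fun s _ => h.n_bound s) hclose (h.ae_inner_sub_nonpos h'.mapsTo ha)
  · rw [← lsMeasure_real_Ioc h'.l_mono h'.l_cont hab.le, neg_sub]
    refine inner_setIntegral_le_of_ae_inner_nonpos measurableSet_Ioc
      (lsMeasure_Ioc_ne_top _ _ a b) (h'.integrableOn_Ioc a b) (fun s _ => h'.n_bound s)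
      (fun s hs => ?_) (h'.ae_inner_sub_nonpos h.mapsTo ha)
    calc ‖(Y s - X s) - (Y a - X a)‖ = ‖(X s - Y s) - (X a - Y a)‖ := by
          rw [← norm_neg]; congr 1; abel
      _ ≤ ε := hclose s hs

theorem norm_sub_sq_le_add (h : IsSkorokhodSolution Ω x w X l n) {y : EuclideanSpace ℝ (Fin d)}
    {Y m : ℝ → EuclideanSpace ℝ (Fin d)} {lam : ℝ → ℝ} (h' : IsSkorokhodSolution Ω y w Y lam m)
    {t ε : ℝ} (ht : 0 ≤ t) (hε : 0 < ε) :
    ‖X t - Y t‖ ^ 2 ≤ ‖x - y‖ ^ 2 + ε * (3 * ((l t - l 0) + (lam t - lam 0))) := by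
  obtain ⟨δ, hδ, hclose⟩ := Metric.uniformContinuousOn_iff.mp
    (isCompact_Icc.uniformContinuousOn_of_continuous
      ((h.contX.sub h'.contX).mono Icc_subset_Ici_self)) ε hε
  have hmono := le_of_locally_antitoneOn_Icc
    (H := fun s => ‖X s - Y s‖ ^ 2 - 3 * ε * (l s + lam s)) ht hδ fun a ha b hb hab hba => by
      have := h.norm_sub_sq_increment_le h' ha.1 hab fun s hs => by
        have hdist := hclose s ⟨ha.1.trans hs.1.le, hs.2.trans hb.2⟩ a ha
          (by rw [Real.dist_eq, abs_of_pos (sub_pos.mpr hs.1)]; linarith [hs.2])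
        rw [dist_eq_norm] at hdist
        exact hdist.le
      linarith
  rw [h.init, h'.init] at hmono
  linarith

end IsSkorokhodSolution

theorem skorokhod_contraction_general {d : ℕ} {Ω : Set (EuclideanSpace ℝ (Fin d))}
    {x y : EuclideanSpace ℝ (Fin d)}
    {w : ℝ → EuclideanSpace ℝ (Fin d)}
    {X Y : ℝ → EuclideanSpace ℝ (Fin d)} {l lam : ℝ → ℝ}
    {n m : ℝ → EuclideanSpace ℝ (Fin d)}
    (h : IsSkorokhodSolution Ω x w X l n)
    (h' : IsSkorokhodSolution Ω y w Y lam m) :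
    ∀ t, 0 ≤ t → ‖X t - Y t‖ ≤ ‖x - y‖ := by
  intro t ht
  have hsq : ‖X t - Y t‖ ^ 2 ≤ ‖x - y‖ ^ 2 :=
    le_of_forall_pos_le_add_mul fun ε hε => h.norm_sub_sq_le_add h' ht hε
  exact (pow_le_pow_iff_left₀ (norm_nonneg _) (norm_nonneg _) two_ne_zero).mp hsq

/-- Pathwise contraction for the Skorokhod problem in a compact convex set:
if `(X, l, n)` solves the Skorokhod problem for `(x, w)` and `(Y, lam, m)` solves the
Skorokhod problem for `(y, w)` (same driving path `w`), then
`‖X t − Y t‖ ≤ ‖x − y‖` for all `t ≥ 0`. -/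
theorem skorokhod_contraction {d : ℕ} {Ω : Set (EuclideanSpace ℝ (Fin d))}
    (hΩcomp : IsCompact Ω) (hΩconv : Convex ℝ Ω) (hΩint : (interior Ω).Nonempty)
    {x y : EuclideanSpace ℝ (Fin d)} (hx : x ∈ Ω) (hy : y ∈ Ω)
    {w : ℝ → EuclideanSpace ℝ (Fin d)} (hw : ContinuousOn w (Ici 0)) (hw0 : w 0 = 0)
    {X Y : ℝ → EuclideanSpace ℝ (Fin d)} {l lam : ℝ → ℝ}
    {n m : ℝ → EuclideanSpace ℝ (Fin d)}
    (h : IsSkorokhodSolution Ω x w X l n)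
    (h' : IsSkorokhodSolution Ω y w Y lam m) :
    ∀ t, 0 ≤ t → ‖X t - Y t‖ ≤ ‖x - y‖ :=
  skorokhod_contraction_general h h'
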